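/- arXiv:1907.08047 — 2 statements merged into one kernel-verified Lean document; each statement's English description precedes it below -/
import Mathlib

section
/- If the pinning point Z is a discrete random variable with values {z_1, z_2, ...}, then for every t > 0 one has, P-almost surely, 1_{τ ≤ t} = Σ_{i≥1} 1_{ζ_t = z_i}; in particular the event {τ ≤ t} belongs to σ(ζ_t) ∨ N_P. -/
open MeasureTheory ProbabilityTheory Real Set

noncomputable def gaussD (v x m : ℝ) : ℝ :=
  (Real.sqrt (2 * Real.pi * v))⁻¹ * Real.exp (-((x - m) ^ 2) / (2 * v))

def IsBrownianMotion {Ω : Type*} [MeasurableSpace Ω] (P : Measure Ω)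
    (W : ℝ → Ω → ℝ) : Prop :=
  (∀ ω, W 0 ω = 0) ∧ (∀ ω, Continuous fun t => W t ω) ∧
  (∀ t, Measurable (W t)) ∧
  (∀ s t : ℝ, 0 ≤ s → s ≤ t →
    P.map (fun ω => W t ω - W s ω) = gaussianReal 0 (t - s).toNNReal) ∧
  (∀ s t u v : ℝ, 0 ≤ s → s ≤ t → t ≤ u → u ≤ v →
    IndepFun (fun ω => W t ω - W s ω) (fun ω => W v ω - W u ω) P)

noncomputable def bridge {Ω : Type*} (W : ℝ → Ω → ℝ) (r z t : ℝ) (ω : Ω) : ℝ :=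
  W (min t r) ω - (min t r / r) * W r ω + (min t r / r) * z

noncomputable def rbridge {Ω : Type*} (W : ℝ → Ω → ℝ) (τ Z : Ω → ℝ) (t : ℝ) (ω : Ω) : ℝ :=
  bridge W (τ ω) (Z ω) t ω

def IndepLPW {Ω : Type*} [MeasurableSpace Ω] (P : Measure Ω) (τ Z : Ω → ℝ)
    (W : ℝ → Ω → ℝ) : Prop :=
  IndepFun τ Z P ∧ IndepFun (fun ω => (τ ω, Z ω)) (fun ω (t : ℝ) => W t ω) P

noncomputable def natFc {Ω : Type*} [MeasurableSpace Ω] (P : Measure Ω)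
    (X : ℝ → Ω → ℝ) (t : ℝ) : MeasurableSpace Ω :=
  (⨆ s ∈ Set.Iic t, MeasurableSpace.comap (X s) Real.measurableSpace) ⊔
    MeasurableSpace.generateFrom {s : Set Ω | P s = 0}

/-! On `{τ ≤ t}` the bridge has reached its pinning point, so `ζ_t = Z` lies in the countable
set `{z_i}`. On `{τ > t}` we have `ζ_t = W_t - (t/τ) W_τ + (t/τ) Z`, and conditionally on
`(τ, Z) = (r, z)` with `r > t` this is a nondegenerate Gaussian (`W_t` is independent of
`W_r - W_t`), so it hits the countable set `{z_i}` with probability zero. Hence `{τ ≤ t}` and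
`{ζ_t ∈ {z_i}}` differ by a null set. -/

open Filter Topology

noncomputable def dyadicCeil (n : ℕ) (r : ℝ) : ℝ := (⌈r * 2 ^ n⌉ : ℤ) / 2 ^ n

lemma dyadicCeil_mem_Icc (n : ℕ) (r : ℝ) : dyadicCeil n r ∈ Icc r (r + (2 ^ n)⁻¹) := by
  have hpow : (0 : ℝ) < 2 ^ n := by positivity
  refine ⟨(le_div_iff₀ hpow).2 (Int.le_ceil _), (div_le_iff₀ hpow).2 ?_⟩
  rw [add_mul, inv_mul_cancel₀ hpow.ne']
  exact (Int.ceil_lt_add_one _).le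

lemma tendsto_dyadicCeil (r : ℝ) : Tendsto (fun n => dyadicCeil n r) atTop (𝓝 r) := by
  have hupper : Tendsto (fun n : ℕ => r + ((2 : ℝ) ^ n)⁻¹) atTop (𝓝 r) := by
    simpa using tendsto_const_nhds.add <| tendsto_inv_atTop_zero.comp
      (tendsto_pow_atTop_atTop_of_one_lt (one_lt_two : (1 : ℝ) < 2))
  exact tendsto_of_tendsto_of_tendsto_of_le_of_le tendsto_const_nhds hupper
    (fun n => (dyadicCeil_mem_Icc n r).1) (fun n => (dyadicCeil_mem_Icc n r).2)

lemma measurable_apply_dyadicCeil {E : Type*} [MeasurableSpace E] (n : ℕ) :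
    Measurable fun p : ℝ × (ℝ → E) => p.2 (dyadicCeil n p.1) := by
  have happly : Measurable fun q : (ℝ → E) × ℤ => q.1 ((q.2 : ℝ) / 2 ^ n) :=
    measurable_from_prod_countable_left fun k => measurable_pi_apply ((k : ℝ) / 2 ^ n)
  exact happly.comp (measurable_snd.prodMk (measurable_fst.mul_const _).ceil)

/-- Evaluation `(r, f) ↦ f r` is not measurable for the product σ-algebra on `ℝ → ℝ`; this
substitute is, and it agrees with evaluation on continuous `f`. -/
noncomputable def dyadicEval (p : ℝ × (ℝ → ℝ)) : ℝ :=
  limUnder atTop fun n => p.2 (dyadicCeil n p.1)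

lemma measurable_dyadicEval : Measurable dyadicEval :=
  (StronglyMeasurable.limUnder fun n =>
    (measurable_apply_dyadicCeil n).stronglyMeasurable).measurable

lemma dyadicEval_of_continuous {f : ℝ → ℝ} (hf : Continuous f) (r : ℝ) :
    dyadicEval (r, f) = f r :=
  ((hf.tendsto r).comp (tendsto_dyadicCeil r)).limUnder_eq

lemma bridge_of_le {Ω : Type*} {W : ℝ → Ω → ℝ} {r z t : ℝ} (hr : r ≠ 0) (hrt : r ≤ t) (ω : Ω) :
    bridge W r z t ω = z := by
  rw [bridge, min_eq_right hrt, div_self hr]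
  ring

lemma bridge_of_ge {Ω : Type*} {W : ℝ → Ω → ℝ} {r z t : ℝ} (htr : t ≤ r) (ω : Ω) :
    bridge W r z t ω = W t ω - t / r * W r ω + t / r * z := by
  rw [bridge, min_eq_left htr]

section

variable {Ω : Type*} [MeasurableSpace Ω] {P : Measure Ω}

lemma measure_eq_comp_eq_zero_of_indepFun {β : Type*} [MeasurableSpace β] [IsFiniteMeasure P]
    {X : Ω → ℝ} {Y : Ω → β} (hX : Measurable X) (hY : Measurable Y) (hYX : IndepFun Y X P)
    [NullSingletonClass (P.map X)] {g : β → ℝ} (hg : Measurable g) :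
    P {ω | X ω = g (Y ω)} = 0 := by
  have hS : MeasurableSet {q : β × ℝ | q.2 = g q.1} :=
    measurableSet_eq_fun measurable_snd (hg.comp measurable_fst)
  change P ((fun ω => (Y ω, X ω)) ⁻¹' {q : β × ℝ | q.2 = g q.1}) = 0
  rw [← Measure.map_apply (hY.prodMk hX) hS,
    (indepFun_iff_map_prod_eq_prod_map_map hY.aemeasurable hX.aemeasurable).1 hYX,
    Measure.prod_apply hS]
  simp [preimage, measure_singleton]

lemma IsBrownianMotion.measure_sub_div_mul_eq_zero [IsFiniteMeasure P] {W : ℝ → Ω → ℝ}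
    (hW : IsBrownianMotion P W) {t r : ℝ} (ht : 0 < t) (htr : t < r) (c : ℝ) :
    P {ω | W t ω - t / r * W r ω = c} = 0 := by
  obtain ⟨hW0, -, hWm, hWlaw, hWindep⟩ := hW
  have hincr (ω : Ω) : W t ω - W 0 ω = W t ω := by rw [hW0, sub_zero]
  have hlaw : P.map (W t) = gaussianReal 0 t.toNNReal := by
    simpa only [hincr, sub_zero] using hWlaw 0 t le_rfl ht.le
  have hindep : IndepFun (fun ω => W r ω - W t ω) (W t) P := by
    simpa only [hincr] using (hWindep 0 t t r le_rfl ht.le le_rfl htr.le).symm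
  have : NullSingletonClass (P.map (W t)) := by
    rw [hlaw]
    exact nullSingletonClass_gaussianReal (by simpa using ht)
  have ha : 1 - t / r ≠ 0 := (sub_pos.2 ((div_lt_one (ht.trans htr)).2 htr)).ne'
  -- `W t - (t/r) W r = (1 - t/r) W t - (t/r) (W r - W t)`
  have hset : {ω | W t ω - t / r * W r ω = c} =
      {ω | W t ω = (c + t / r * (W r ω - W t ω)) / (1 - t / r)} := by
    ext ω
    rw [mem_ofPred_eq, mem_ofPred_eq, eq_div_iff ha]
    constructor <;> intro h <;> linear_combination h
  rw [hset]
  exact measure_eq_comp_eq_zero_of_indepFun (hWm t) ((hWm r).sub (hWm t)) hindep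
    (g := fun y => (c + t / r * y) / (1 - t / r)) (by fun_prop)

/-- For `p = ((r, z), f)` with `t ≤ r` and `f` continuous, this is `bridge f r z t`. -/
noncomputable def bridgeOfPath (t : ℝ) (p : (ℝ × ℝ) × (ℝ → ℝ)) : ℝ :=
  p.2 t - t / p.1.1 * dyadicEval (p.1.1, p.2) + t / p.1.1 * p.1.2

lemma measurable_bridgeOfPath (t : ℝ) : Measurable (bridgeOfPath t) := by
  have hr : Measurable fun p : (ℝ × ℝ) × (ℝ → ℝ) => p.1.1 := measurable_fst.fst
  unfold bridgeOfPath
  exact ((measurable_pi_apply t).comp measurable_snd).sub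
    ((measurable_const.div hr).mul (measurable_dyadicEval.comp (hr.prodMk measurable_snd)))
    |>.add ((measurable_const.div hr).mul measurable_fst.snd)

lemma IsBrownianMotion.measure_lt_and_rbridge_eq_eq_zero [IsFiniteMeasure P]
    {W : ℝ → Ω → ℝ} (hW : IsBrownianMotion P W) {τ Z : Ω → ℝ} (hτ : Measurable τ)
    (hZ : Measurable Z) (hInd : IndepFun (fun ω => (τ ω, Z ω)) (fun ω t => W t ω) P)
    {t : ℝ} (ht : 0 < t) (c : ℝ) :
    P {ω | t < τ ω ∧ rbridge W τ Z t ω = c} = 0 := by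
  set path : Ω → ℝ → ℝ := fun ω t => W t ω
  have hpath : Measurable path := measurable_pi_lambda _ hW.2.2.1
  set S := {p : (ℝ × ℝ) × (ℝ → ℝ) | t < p.1.1 ∧ bridgeOfPath t p = c}
  have hS : MeasurableSet S :=
    (measurableSet_lt measurable_const measurable_fst.fst).inter
      (measurableSet_eq_fun (measurable_bridgeOfPath t) measurable_const)
  have hbridge (q : ℝ × ℝ) (ω : Ω) : bridgeOfPath t (q, path ω) =
      W t ω - t / q.1 * W q.1 ω + t / q.1 * q.2 := by
    rw [bridgeOfPath, dyadicEval_of_continuous (hW.2.1 ω)]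
  have hpre : {ω | t < τ ω ∧ rbridge W τ Z t ω = c} =
      (fun ω => ((τ ω, Z ω), path ω)) ⁻¹' S := by
    ext ω
    simp only [mem_ofPred_eq, mem_preimage, S, hbridge, rbridge]
    exact and_congr_right fun h => by rw [bridge_of_ge h.le]
  have hsection (q : ℝ × ℝ) : P.map path (Prod.mk q ⁻¹' S) = 0 := by
    rcases le_or_gt q.1 t with hq | hq
    · convert measure_empty (μ := P.map path)
      exact eq_empty_of_forall_notMem fun f hf => hq.not_gt hf.1
    rw [Measure.map_apply hpath (measurable_prodMk_left hS)]
    refine measure_mono_null (fun ω hω => ?_)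
      (hW.measure_sub_div_mul_eq_zero ht hq (c - t / q.1 * q.2))
    exact eq_sub_of_add_eq (hbridge q ω ▸ hω.2)
  rw [hpre, ← Measure.map_apply ((hτ.prodMk hZ).prodMk hpath) hS,
    (indepFun_iff_map_prod_eq_prod_map_map (hτ.prodMk hZ).aemeasurable
      hpath.aemeasurable).1 hInd, Measure.prod_apply hS]
  simp [hsection]

end

lemma tsum_ite_eq_indicator_range {ι α M : Type*} [DecidableEq α] [AddCommMonoidWithOne M]
    [TopologicalSpace M] {zs : ι → α} (hzs : Function.Injective zs) (x : α) :
    ∑' i, (if x = zs i then (1 : M) else 0) = (range zs).indicator 1 x := by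
  by_cases hx : x ∈ range zs
  · obtain ⟨i, rfl⟩ := hx
    rw [tsum_eq_single i fun j hj => if_neg fun h => hj (hzs h).symm, if_pos rfl,
      indicator_of_mem (mem_range_self i), Pi.one_apply]
  · rw [indicator_of_notMem hx, tsum_congr fun i => if_neg fun h => hx ⟨i, h.symm⟩, tsum_zero]

lemma MeasurableSet.sup_generateFrom_null {Ω : Type*} {m m₀ : MeasurableSpace Ω}
    {P : Measure[m₀] Ω} {B E : Set Ω} (hB : MeasurableSet[m] B) (hEB : E ⊆ B)
    (hBE : P (B \ E) = 0) :
    MeasurableSet[m ⊔ MeasurableSpace.generateFrom {s : Set Ω | P s = 0}] E := by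
  rw [← sdiff_sdiff_cancel_left hEB]
  exact (le_sup_left (a := m) _ hB).diff
    (le_sup_right (b := MeasurableSpace.generateFrom {s : Set Ω | P s = 0}) _
      (MeasurableSpace.measurableSet_generateFrom hBE))

theorem stmt9 {Ω : Type*} [MeasurableSpace Ω] (P : Measure Ω) [IsProbabilityMeasure P]
    (W : ℝ → Ω → ℝ) (hW : IsBrownianMotion P W)
    (τ Z : Ω → ℝ) (hτ : Measurable τ) (hZ : Measurable Z) (hτpos : ∀ ω, 0 < τ ω)
    (hInd : IndepLPW P τ Z W)
    (zs : ℕ → ℝ) (hinj : Function.Injective zs) (hZd : ∀ ω, ∃ i, Z ω = zs i) :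
    ∀ t : ℝ, 0 < t →
      ((fun ω => if τ ω ≤ t then (1 : ℝ) else 0) =ᵐ[P]
        fun ω => ∑' i, if rbridge W τ Z t ω = zs i then (1 : ℝ) else 0) ∧
      MeasurableSet[MeasurableSpace.comap (rbridge W τ Z t) Real.measurableSpace ⊔
          MeasurableSpace.generateFrom {s : Set Ω | P s = 0}]
        {ω | τ ω ≤ t} := by
  intro t ht
  set B := rbridge W τ Z t ⁻¹' range zs
  have hEB : {ω | τ ω ≤ t} ⊆ B := fun ω hω => by
    obtain ⟨i, hi⟩ := hZd ω
    exact ⟨i, by rw [← hi, rbridge, bridge_of_le (hτpos ω).ne' hω]⟩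
  have hBE : P (B \ {ω | τ ω ≤ t}) = 0 := by
    have hcover : B \ {ω | τ ω ≤ t} = ⋃ i, {ω | t < τ ω ∧ rbridge W τ Z t ω = zs i} := by
      ext ω
      simp [B, and_comm, eq_comm]
    rw [hcover, measure_iUnion_null_iff]
    exact fun i => hW.measure_lt_and_rbridge_eq_eq_zero hτ hZ hInd.2 ht (zs i)
  refine ⟨?_, MeasurableSet.sup_generateFrom_null ⟨_, (countable_range zs).measurableSet, rfl⟩
    hEB hBE⟩
  filter_upwards [indicator_ae_eq_of_ae_eq_set (f := (1 : Ω → ℝ))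
    (ae_eq_set.2 ⟨by rw [sdiff_eq_empty.2 hEB, measure_empty], hBE⟩)] with ω hω
  rw [tsum_ite_eq_indicator_range hinj, ← indicator_comp_right]
  simpa [B, indicator_apply] using hω
end

section
/- Let ξ be the Brownian bridge information process with random length τ and two-point pinning point Z ∈ {z_1, z_2}. Then τ is a stopping time with respect to the completed natural filtration F^{ξ,c} of ξ. -/
open MeasureTheory ProbabilityTheory Real Set

/-!
On `{τ ≤ t}` the bridge has already reached its pinning point, so `ξ_t ∈ {z₁, z₂}`. On `{t < τ}`,
conditionally on `(τ, Z) = (r, z)`, the value `ξ_t = (1 - t/r) W_t - (t/r) (W_r - W_t) + (t/r) z`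
is a nondegenerate Gaussian, so `ξ_t` hits a given level there with probability zero. Hence
`{τ ≤ t}` differs from `{ξ_t ∈ {z₁, z₂}}` by a null set, which the completion adds to `F^{ξ,c}_t`.
-/

lemma measure_preimage_eq_zero_of_indepFun {Ω α β : Type*} [MeasurableSpace Ω]
    [MeasurableSpace α] [MeasurableSpace β] {P : Measure Ω} [IsFiniteMeasure P]
    {X : Ω → α} {Y : Ω → β} (hX : Measurable X) (hY : Measurable Y) (hXY : IndepFun X Y P)
    {S : Set (α × β)} (hS : MeasurableSet S) (hslice : ∀ x, P (Y ⁻¹' (Prod.mk x ⁻¹' S)) = 0) :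
    P ((fun ω => (X ω, Y ω)) ⁻¹' S) = 0 := by
  rw [← Measure.map_apply (hX.prodMk hY) hS,
    (indepFun_iff_map_prod_eq_prod_map_map hX.aemeasurable hY.aemeasurable).mp hXY,
    Measure.prod_apply hS]
  simp [Measure.map_apply hY (measurable_prodMk_left hS), hslice]

lemma eq_iff_forall_exists_rat_near {g : ℝ → ℝ} {r c : ℝ} (hg : ContinuousAt g r) :
    g r = c ↔ ∀ n : ℕ, ∃ q : ℚ, |(q : ℝ) - r| < 1 / (n + 1) ∧ |g q - c| < 1 / (n + 1) := by
  rw [Metric.continuousAt_iff] at hg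
  constructor
  · rintro rfl n
    obtain ⟨δ, hδ, hgδ⟩ := hg (1 / (n + 1)) (by positivity)
    have hpos : 0 < min δ (1 / (n + 1)) := lt_min hδ (by positivity)
    obtain ⟨q, hrq, hqr⟩ := exists_rat_btwn (lt_add_of_pos_right r hpos)
    have hq : |(q : ℝ) - r| < min δ (1 / (n + 1)) := by
      rw [abs_of_pos (sub_pos.2 hrq)]; linarith
    exact ⟨q, hq.trans_le (min_le_right _ _), hgδ (hq.trans_le (min_le_left _ _))⟩
  · intro h
    refine eq_of_forall_dist_le fun ε hε => ?_
    obtain ⟨δ, hδ, hgδ⟩ := hg (ε / 2) (by positivity)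
    obtain ⟨n, hn⟩ := exists_nat_one_div_lt (lt_min hδ (half_pos hε))
    obtain ⟨q, hq, hgq⟩ := h n
    have hgr : dist (g q) (g r) < ε / 2 :=
      hgδ ((hq.trans hn).trans_le (min_le_left _ _))
    calc dist (g r) c ≤ dist (g q) (g r) + dist (g q) c := dist_triangle_left _ _ _
      _ ≤ ε / 2 + ε / 2 := by
          rw [Real.dist_eq (g q) c]
          linarith [(hgq.trans hn).trans_le (min_le_right _ _)]
      _ = ε := add_halves ε

namespace IsBrownianMotion

variable {Ω : Type*} [MeasurableSpace Ω] {P : Measure Ω} {W : ℝ → Ω → ℝ}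

lemma map_eq_gaussianReal (hW : IsBrownianMotion P W) {s : ℝ} (hs : 0 ≤ s) :
    P.map (W s) = gaussianReal 0 s.toNNReal := by
  simpa [hW.1] using hW.2.2.2.1 0 s le_rfl hs

lemma measure_preimage_singleton_eq_zero (hW : IsBrownianMotion P W) {s : ℝ} (hs : 0 < s) (x : ℝ) :
    P (W s ⁻¹' {x}) = 0 := by
  rw [← Measure.map_apply (hW.2.2.1 s) (measurableSet_singleton x),
    hW.map_eq_gaussianReal hs.le]
  exact gaussianReal_absolutelyContinuous 0 (by simpa using hs) (measure_singleton x)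

lemma measure_linear_comb_eq_zero [IsFiniteMeasure P] (hW : IsBrownianMotion P W) {s u : ℝ}
    (hs : 0 < s) (hsu : s ≤ u) {a b : ℝ} (hab : a + b ≠ 0) (c : ℝ) :
    P {ω | a * W s ω + b * W u ω = c} = 0 := by
  have hmeas := hW.2.2.1
  -- `a W_s + b W_u = (a + b) W_s + b (W_u - W_s)`, and `W_s` is independent of the increment.
  have hind : IndepFun (fun ω => W u ω - W s ω) (W s) P := by
    simpa [hW.1] using (hW.2.2.2.2 0 s s u le_rfl hs.le le_rfl hsu).symm
  have hS : MeasurableSet {p : ℝ × ℝ | (a + b) * p.2 + b * p.1 = c} :=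
    measurableSet_eq_fun (by fun_prop) measurable_const
  convert measure_preimage_eq_zero_of_indepFun (by fun_prop) (hmeas s) hind hS
    fun x => ?_ using 2
  · ext ω; simp only [Set.mem_ofPred_eq, Set.mem_preimage]; constructor <;> intro h <;> linarith
  · convert hW.measure_preimage_singleton_eq_zero hs ((c - b * x) / (a + b)) using 2
    ext y
    simp only [Set.mem_preimage, Set.mem_ofPred_eq, Set.mem_singleton_iff]
    rw [eq_div_iff hab]
    constructor <;> intro h <;> linarith

end IsBrownianMotion

lemma bridge_eq_of_le {Ω : Type*} (W : ℝ → Ω → ℝ) {r t : ℝ} (hr : r ≠ 0) (hrt : r ≤ t)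
    (z : ℝ) (ω : Ω) : bridge W r z t ω = z := by
  rw [bridge, min_eq_right hrt, div_self hr]
  ring

lemma bridge_eq_of_lt {Ω : Type*} (W : ℝ → Ω → ℝ) {r t : ℝ} (htr : t < r) (z : ℝ) (ω : Ω) :
    bridge W r z t ω = W t ω - t / r * W r ω + t / r * z := by
  rw [bridge, min_eq_left htr.le]

lemma measure_lt_and_rbridge_eq_zero {Ω : Type*} [MeasurableSpace Ω] {P : Measure Ω}
    [IsFiniteMeasure P] {W : ℝ → Ω → ℝ} (hW : IsBrownianMotion P W) {τ Z : Ω → ℝ}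
    (hτ : Measurable τ) (hZ : Measurable Z)
    (hInd : IndepFun (fun ω => (τ ω, Z ω)) (fun ω s => W s ω) P) {t : ℝ} (ht : 0 < t) (c : ℝ) :
    P {ω | t < τ ω ∧ rbridge W τ Z t ω = c} = 0 := by
  -- `(r, f) ↦ f r` is not measurable for the product σ-algebra on paths, so the value of the
  -- bridge at the random length is read off continuous paths through rational times.
  set g : ℝ → (ℝ → ℝ) → ℝ → ℝ := fun z f r => f t - t / r * f r + t / r * z
  have hg : ∀ {f : ℝ → ℝ}, Continuous f → ∀ z {r : ℝ}, t < r → ContinuousAt (g z f) r :=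
    fun hf z r htr => by
      have hr : r ≠ 0 := (ht.trans htr).ne'
      simp only [g]
      fun_prop (disch := exact hr)
  set S : Set ((ℝ × ℝ) × (ℝ → ℝ)) := {p | t < p.1.1 ∧ ∀ n : ℕ, ∃ q : ℚ,
    |(q : ℝ) - p.1.1| < 1 / (n + 1) ∧ |g p.1.2 p.2 q - c| < 1 / (n + 1)}
  have hS : MeasurableSet S := by
    simp only [S, Set.ofPred_and, Set.ofPred_forall, Set.ofPred_exists]
    refine (measurableSet_lt measurable_const (measurable_fst.comp measurable_fst)).inter
      (MeasurableSet.iInter fun n => MeasurableSet.iUnion fun q => ?_)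
    refine (measurableSet_lt (f := fun p : (ℝ × ℝ) × (ℝ → ℝ) => |(q : ℝ) - p.1.1|)
      (by fun_prop) measurable_const).inter (measurableSet_lt ?_ measurable_const)
    have ht' : Measurable fun f : ℝ → ℝ => f t := measurable_pi_apply t
    have hq : Measurable fun f : ℝ → ℝ => f q := measurable_pi_apply _
    simp only [g]
    fun_prop
  have hE : {ω | t < τ ω ∧ rbridge W τ Z t ω = c} =
      (fun ω => ((τ ω, Z ω), fun s => W s ω)) ⁻¹' S := by
    ext ω
    simp only [Set.mem_ofPred_eq, Set.mem_preimage, S, and_congr_right_iff]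
    intro htτ
    rw [rbridge, bridge_eq_of_lt W htτ, ← eq_iff_forall_exists_rat_near (hg (hW.2.1 ω) _ htτ)]
  rw [hE]
  refine measure_preimage_eq_zero_of_indepFun (hτ.prodMk hZ) (measurable_pi_lambda _ hW.2.2.1)
    hInd hS fun ⟨r, z⟩ => ?_
  rcases le_or_gt r t with hrt | htr
  · convert measure_empty (μ := P)
    ext ω
    simpa [S] using fun h => absurd h hrt.not_gt
  refine measure_mono_null (fun ω hω => ?_) (hW.measure_linear_comb_eq_zero ht htr.le
    (a := 1) (b := -(t / r)) ?_ (c - t / r * z))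
  · obtain ⟨-, hω⟩ := hω
    have := (eq_iff_forall_exists_rat_near (hg (hW.2.1 ω) z htr)).2 hω
    simp only [g] at this
    simp only [Set.mem_ofPred_eq]
    linarith
  · linarith [(div_lt_one (ht.trans htr)).2 htr]

lemma comap_le_natFc {Ω : Type*} [MeasurableSpace Ω] (P : Measure Ω) (X : ℝ → Ω → ℝ)
    {s t : ℝ} (hst : s ≤ t) : MeasurableSpace.comap (X s) Real.measurableSpace ≤ natFc P X t :=
  le_sup_of_le_left (le_iSup₂_of_le s hst le_rfl)

lemma measurableSet_natFc_of_measure_eq_zero {Ω : Type*} [MeasurableSpace Ω] {P : Measure Ω}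
    (X : ℝ → Ω → ℝ) (t : ℝ) {N : Set Ω} (hN : P N = 0) : MeasurableSet[natFc P X t] N :=
  le_sup_right (a := ⨆ s ∈ Set.Iic t, MeasurableSpace.comap (X s) Real.measurableSpace) _
    (MeasurableSpace.measurableSet_generateFrom hN)

theorem stmt16_general {Ω : Type*} [MeasurableSpace Ω] (P : Measure Ω) [IsProbabilityMeasure P]
    (W : ℝ → Ω → ℝ) (hW : IsBrownianMotion P W)
    (τ Z : Ω → ℝ) (hτ : Measurable τ) (hZ : Measurable Z) (hτpos : ∀ ω, 0 < τ ω)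
    (hInd : IndepLPW P τ Z W)
    (z1 z2 : ℝ)
    (hZtwo : ∀ ω, Z ω = z1 ∨ Z ω = z2) :
    ∀ t : ℝ, MeasurableSet[natFc P (rbridge W τ Z) t] {ω | τ ω ≤ t} := by
  intro t
  rcases le_or_gt t 0 with ht | ht
  · convert @MeasurableSet.empty Ω (natFc P (rbridge W τ Z) t)
    ext ω
    simpa using ht.trans_lt (hτpos ω)
  set N := {ω | t < τ ω ∧ rbridge W τ Z t ω = z1} ∪ {ω | t < τ ω ∧ rbridge W τ Z t ω = z2}
  have hN : P N = 0 := measure_union_null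
    (measure_lt_and_rbridge_eq_zero hW hτ hZ hInd.2 ht z1)
    (measure_lt_and_rbridge_eq_zero hW hτ hZ hInd.2 ht z2)
  have hEq : {ω | τ ω ≤ t} = rbridge W τ Z t ⁻¹' {z1, z2} \ N := by
    ext ω
    by_cases hτt : τ ω ≤ t
    · simp [N, hτt, rbridge, bridge_eq_of_le W (hτpos ω).ne' hτt, hZtwo ω]
    · simp [N, hτt, not_le.1 hτt, or_iff_not_imp_left]
  rw [hEq]
  exact (comap_le_natFc P _ le_rfl _ ⟨_, (measurableSet_singleton z2).insert z1, rfl⟩).diff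
    (measurableSet_natFc_of_measure_eq_zero _ t hN)

theorem stmt16 {Ω : Type*} [MeasurableSpace Ω] (P : Measure Ω) [IsProbabilityMeasure P]
    (W : ℝ → Ω → ℝ) (hW : IsBrownianMotion P W)
    (τ Z : Ω → ℝ) (hτ : Measurable τ) (hZ : Measurable Z) (hτpos : ∀ ω, 0 < τ ω)
    (hInd : IndepLPW P τ Z W)
    (z1 z2 p1 : ℝ) (hz : z1 ≠ z2) (hp1 : 0 < p1) (hp1' : p1 < 1)
    (hZtwo : ∀ ω, Z ω = z1 ∨ Z ω = z2)
    (hPz1 : P {ω | Z ω = z1} = ENNReal.ofReal p1) :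
    ∀ t : ℝ, MeasurableSet[natFc P (rbridge W τ Z) t] {ω | τ ω ≤ t} :=
  stmt16_general P W hW τ Z hτ hZ hτpos hInd z1 z2 hZtwo
end
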